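/- Under Assumptions 1 and 3, let C = ∪_{k=0}^{ℓ} ( supp(x_k*(S)) ∪ Z_k(S) ). Then the regularized cascade applied to C reproduces the cascade applied to S: x_k*(C) = x_k*(S) and Z_k(C) = Z_k(S) for all k ∈ {0,…,ℓ}. -/

import Mathlib

open scoped Classical

noncomputable section

/-- The cost functional `c ⬝ x`. -/
def dotp {d : ℕ} (c x : Fin d → ℝ) : ℝ := ∑ i, c i * x i

/-- The support scenarios of the scenario program over `T`. -/
def suppSet {Δ : Type*} {d : ℕ} (z : Finset Δ → Fin d → ℝ) (T : Finset Δ) : Finset Δ :=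
  T.filter fun δ => z (T.erase δ) ≠ z T

/-- The regularization set `Z(T)`: the `d - |supp(T)|` smallest-labelled scenarios of
`T \ supp(T)` (labels given by the linear order on `Δ`). -/
def zedSet {Δ : Type*} [LinearOrder Δ] {d : ℕ} (z : Finset Δ → Fin d → ℝ)
    (T : Finset Δ) : Finset Δ :=
  (((T \ suppSet z T).sort (· ≤ ·)).take (d - (suppSet z T).card)).toFinset

/-- The regularized cascade discarding scheme: at each stage remove
`R_k = supp(T_k) ∪ Z_k(T_k)`. -/
def rstage {Δ : Type*} [LinearOrder Δ] {d : ℕ} (z : Finset Δ → Fin d → ℝ)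
    (T : Finset Δ) : ℕ → Finset Δ
  | 0 => T
  | k + 1 => rstage z T k \ (suppSet z (rstage z T k) ∪ zedSet z (rstage z T k))

/-!
If `supp(T) ⊆ U ⊆ T` and `z(supp T) = z T`, then `U` has the same minimizer as `T` (the
optimal value is monotone in the scenario set), the same support scenarios, and, once it also
contains `Z(T)`, the same regularization set (the smallest labels of `T \ supp T` survive in
`U \ supp T`). By induction on `k`, the `k`-th stage of the cascade applied to `C ⊆ S` is
`C ∩ S_k`, which lies between `R_k(S) = supp(S_k) ∪ Z_k(S)` and `S_k`.
-/

theorem List.take_filter_of_forall_mem_take {α : Type*} (p : α → Bool) :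
    ∀ (l : List α) (m : ℕ), (∀ a ∈ l.take m, p a) → (l.filter p).take m = l.take m
  | [], _, _ => rfl
  | _ :: _, 0, _ => rfl
  | a :: l, m + 1, h => by
    have ha : p a := h a (by simp)
    rw [List.filter_cons_of_pos ha, List.take_succ_cons, List.take_succ_cons,
      take_filter_of_forall_mem_take p l m fun b hb => h b (by simp [hb])]

theorem Finset.sort_eq_filter_sort {α : Type*} [LinearOrder α] {A B : Finset α}
    (hAB : A ⊆ B) : A.sort (· ≤ ·) = (B.sort (· ≤ ·)).filter (· ∈ A) := by
  refine List.Perm.eq_of_pairwise' (A.pairwise_sort _) ((B.pairwise_sort _).filter _) ?_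
  refine (List.perm_ext_iff_of_nodup (A.sort_nodup _) ((B.sort_nodup _).filter _)).2 fun a => ?_
  simp only [Finset.mem_sort, List.mem_filter, decide_eq_true_eq]
  exact ⟨fun ha => ⟨hAB ha, ha⟩, And.right⟩

section ScenarioProgram

variable {Δ : Type*} {d : ℕ}

def SolvesScenarioPrograms (X : Set (Fin d → ℝ)) (c : Fin d → ℝ) (g : (Fin d → ℝ) → Δ → ℝ)
    (z : Finset Δ → Fin d → ℝ) : Prop :=
  ∀ I : Finset Δ, z I ∈ X ∧ (∀ δ ∈ I, g (z I) δ ≤ 0) ∧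
    ∀ y ∈ X, (∀ δ ∈ I, g y δ ≤ 0) → y ≠ z I → dotp c (z I) < dotp c y

namespace SolvesScenarioPrograms

variable {X : Set (Fin d → ℝ)} {c : Fin d → ℝ} {g : (Fin d → ℝ) → Δ → ℝ}
  {z : Finset Δ → Fin d → ℝ} {I J K : Finset Δ}

theorem dotp_lt_of_subset_of_ne (hz : SolvesScenarioPrograms X c g z) (hIJ : I ⊆ J)
    (hne : z J ≠ z I) : dotp c (z I) < dotp c (z J) :=
  (hz I).2.2 (z J) (hz J).1 (fun δ hδ => (hz J).2.1 δ (hIJ hδ)) hne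

theorem dotp_le_of_subset (hz : SolvesScenarioPrograms X c g z) (hIJ : I ⊆ J) :
    dotp c (z I) ≤ dotp c (z J) := by
  by_cases h : z J = z I
  · rw [h]
  · exact (hz.dotp_lt_of_subset_of_ne hIJ h).le

theorem eq_of_subset_of_subset (hz : SolvesScenarioPrograms X c g z) (hIJ : I ⊆ J)
    (hJK : J ⊆ K) (hIK : z I = z K) : z J = z K := by
  by_contra hne
  have h₁ := hz.dotp_lt_of_subset_of_ne hJK (Ne.symm hne)
  have h₂ := hz.dotp_le_of_subset hIJ
  rw [hIK] at h₂
  exact h₁.not_ge h₂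

theorem suppSet_eq_of_suppSet_subset (hz : SolvesScenarioPrograms X c g z) {T U : Finset Δ}
    (hsU : suppSet z T ⊆ U) (hUT : U ⊆ T) (hnd : z (suppSet z T) = z T) :
    suppSet z U = suppSet z T := by
  have hzU := hz.eq_of_subset_of_subset hsU hUT hnd
  ext δ
  simp only [suppSet, Finset.mem_filter, hzU]
  constructor
  · rintro ⟨hδU, hU⟩
    refine ⟨hUT hδU, fun hT => hU ?_⟩
    have hsU' : suppSet z T ⊆ U.erase δ := fun x hx =>
      Finset.mem_erase.2 ⟨by rintro rfl; exact (Finset.mem_filter.1 hx).2 hT, hsU hx⟩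
    exact hz.eq_of_subset_of_subset hsU' ((U.erase_subset δ).trans hUT) hnd
  · rintro ⟨hδT, hT⟩
    refine ⟨hsU (Finset.mem_filter.2 ⟨hδT, hT⟩), fun hU => hT ?_⟩
    exact hz.eq_of_subset_of_subset (Finset.erase_subset_erase δ hUT) (T.erase_subset δ) hU

end SolvesScenarioPrograms

end ScenarioProgram

section Cascade

variable {Δ : Type*} [LinearOrder Δ] {d : ℕ} {z : Finset Δ → Fin d → ℝ}

theorem zedSet_subset (T : Finset Δ) : zedSet z T ⊆ T \ suppSet z T := fun _ ha =>
  (Finset.mem_sort _).1 (List.take_subset _ _ (List.mem_toFinset.1 ha))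

theorem suppSet_union_zedSet_subset (T : Finset Δ) : suppSet z T ∪ zedSet z T ⊆ T :=
  Finset.union_subset (Finset.filter_subset _ _) ((zedSet_subset T).trans Finset.sdiff_subset)

theorem zedSet_eq_of_subset {T U : Finset Δ} (hUT : U ⊆ T)
    (hs : suppSet z U = suppSet z T) (hZU : zedSet z T ⊆ U) : zedSet z U = zedSet z T := by
  unfold zedSet
  rw [hs, Finset.sort_eq_filter_sort (Finset.sdiff_subset_sdiff hUT subset_rfl),
    List.take_filter_of_forall_mem_take]
  intro a ha
  have ha' : a ∈ zedSet z T := List.mem_toFinset.2 ha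
  exact decide_eq_true (Finset.mem_sdiff.2 ⟨hZU ha', (Finset.mem_sdiff.1 (zedSet_subset T ha')).2⟩)

theorem rstage_subset (T : Finset Δ) : ∀ k, rstage z T k ⊆ T
  | 0 => subset_rfl
  | k + 1 => Finset.sdiff_subset.trans (rstage_subset T k)

variable {X : Set (Fin d → ℝ)} {c : Fin d → ℝ} {g : (Fin d → ℝ) → Δ → ℝ}

theorem SolvesScenarioPrograms.stage_eq_of_subset (hz : SolvesScenarioPrograms X c g z)
    {T U : Finset Δ} (hRU : suppSet z T ∪ zedSet z T ⊆ U) (hUT : U ⊆ T)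
    (hnd : z (suppSet z T) = z T) :
    z U = z T ∧ suppSet z U = suppSet z T ∧ zedSet z U = zedSet z T := by
  have hs := hz.suppSet_eq_of_suppSet_subset (Finset.union_subset_left hRU) hUT hnd
  exact ⟨hz.eq_of_subset_of_subset (Finset.union_subset_left hRU) hUT hnd, hs,
    zedSet_eq_of_subset hUT hs (Finset.union_subset_right hRU)⟩

theorem SolvesScenarioPrograms.rstage_eq_inter (hz : SolvesScenarioPrograms X c g z)
    {S U : Finset Δ} (hUS : U ⊆ S) :
    ∀ k, (∀ j < k, suppSet z (rstage z S j) ∪ zedSet z (rstage z S j) ⊆ U) →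
      (∀ j < k, z (suppSet z (rstage z S j)) = z (rstage z S j)) →
      rstage z U k = U ∩ rstage z S k
  | 0, _, _ => (Finset.inter_eq_left.2 hUS).symm
  | k + 1, hR, hnd => by
    have ih := hz.rstage_eq_inter hUS k (fun j hj => hR j (by omega))
      (fun j hj => hnd j (by omega))
    obtain ⟨-, hs, hZ⟩ := hz.stage_eq_of_subset
      (Finset.subset_inter (hR k k.lt_succ_self) (suppSet_union_zedSet_subset _))
      Finset.inter_subset_right (hnd k k.lt_succ_self)
    rw [rstage, rstage, ih, hs, hZ, Finset.inter_sdiff_assoc]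

end Cascade

theorem stmt8_general {Δ : Type*} [LinearOrder Δ]
    (d : ℕ) (X : Set (Fin d → ℝ))
    (c : Fin d → ℝ) (g : (Fin d → ℝ) → Δ → ℝ)
    -- Assumption 1: `z I` is the unique minimizer of the scenario program over `I`
    (z : Finset Δ → Fin d → ℝ)
    (hz : ∀ I : Finset Δ, z I ∈ X ∧ (∀ δ ∈ I, g (z I) δ ≤ 0) ∧
      ∀ y ∈ X, (∀ δ ∈ I, g y δ ≤ 0) → y ≠ z I → dotp c (z I) < dotp c y)
    (ℓ : ℕ) (S : Finset Δ)
    -- Assumption 3: non-degeneracy of every stage of the cascade applied to `S`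
    -- and to its subsets
    (hnondeg : ∀ T : Finset Δ, T ⊆ S → ∀ k ≤ ℓ,
      z (suppSet z (rstage z T k)) = z (rstage z T k))
    (C : Finset Δ)
    (hC : C = (Finset.range (ℓ + 1)).biUnion fun k =>
      suppSet z (rstage z S k) ∪ zedSet z (rstage z S k)) :
    ∀ k ≤ ℓ, z (rstage z C k) = z (rstage z S k) ∧
      zedSet z (rstage z C k) = zedSet z (rstage z S k) := by
  have hsol : SolvesScenarioPrograms X c g z := hz
  have hRC : ∀ k ≤ ℓ, suppSet z (rstage z S k) ∪ zedSet z (rstage z S k) ⊆ C := fun k hk x hx =>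
    hC ▸ Finset.mem_biUnion.2 ⟨k, Finset.mem_range.2 (Nat.lt_succ_of_le hk), hx⟩
  have hCS : C ⊆ S := hC ▸ Finset.biUnion_subset.2 fun k _ =>
    (suppSet_union_zedSet_subset _).trans (rstage_subset S k)
  intro k hk
  have hCk : rstage z C k = C ∩ rstage z S k := hsol.rstage_eq_inter hCS k
    (fun j hj => hRC j (by omega)) (fun j hj => hnondeg S subset_rfl j (by omega))
  obtain ⟨hx, -, hZ⟩ := hsol.stage_eq_of_subset (Finset.subset_inter (hRC k hk)
    (suppSet_union_zedSet_subset _)) Finset.inter_subset_right (hnondeg S subset_rfl k hk)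
  rw [hCk]
  exact ⟨hx, hZ⟩

/-- Proposition 2, item (i): under Assumptions 1 and 3, the regularized cascade applied to
`C = ∪_{k=0}^{ℓ} (supp(x_k*(S)) ∪ Z_k(S))` reproduces the cascade applied to `S`:
`x_k*(C) = x_k*(S)` and `Z_k(C) = Z_k(S)` for all `k ∈ {0,…,ℓ}`. -/
theorem stmt8 {Δ : Type*} [LinearOrder Δ]
    (d : ℕ) (X : Set (Fin d → ℝ)) (hXclosed : IsClosed X) (hXconvex : Convex ℝ X)
    (c : Fin d → ℝ) (g : (Fin d → ℝ) → Δ → ℝ)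
    (hgconvex : ∀ δ : Δ, ConvexOn ℝ Set.univ fun x => g x δ)
    -- Assumption 1: `z I` is the unique minimizer of the scenario program over `I`
    (z : Finset Δ → Fin d → ℝ)
    (hz : ∀ I : Finset Δ, z I ∈ X ∧ (∀ δ ∈ I, g (z I) δ ≤ 0) ∧
      ∀ y ∈ X, (∀ δ ∈ I, g y δ ≤ 0) → y ≠ z I → dotp c (z I) < dotp c y)
    (ℓ : ℕ) (S : Finset Δ) (hS : S.card > (ℓ + 1) * d)
    -- Assumption 3: non-degeneracy of every stage of the cascade applied to `S`
    -- and to its subsets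
    (hnondeg : ∀ T : Finset Δ, T ⊆ S → ∀ k ≤ ℓ,
      z (suppSet z (rstage z T k)) = z (rstage z T k))
    (C : Finset Δ)
    (hC : C = (Finset.range (ℓ + 1)).biUnion fun k =>
      suppSet z (rstage z S k) ∪ zedSet z (rstage z S k)) :
    ∀ k ≤ ℓ, z (rstage z C k) = z (rstage z S k) ∧
      zedSet z (rstage z C k) = zedSet z (rstage z S k) :=
  stmt8_general d X c g z hz ℓ S hnondeg C hC
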